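/- Let φ : 2^V → ℝ be a nonnegative submodular function of range g (i.e., φ(V) = g ≥ 0). Then the base polytope of UpMin(φ) equals the intersection of the base polytope of φ with the standard simplex Δ_g = {q ∈ ℝ^V_{≥0} : q(V) = g}, and also equals the intersection of the base polytope of φ with the nonnegative orthant ℝ^V_{≥0}. -/

import Mathlib

/-! A point `q` of the base polytope of `UpMin φ` is nonnegative because
`q(V \ {v}) ≤ UpMin φ (V \ {v}) ≤ φ V = q(V)`; conversely, for nonnegative `q` the sums
`q(I)` are monotone in `I`, so `q(I) ≤ q(K) ≤ φ K` for every `K ⊇ I`. -/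

open Finset

/-- The UpMin transform: `UpMin φ I = min_{K ⊇ I} φ K`. -/
noncomputable def UpMin {V : Type*} [Fintype V] [DecidableEq V]
    (φ : Finset V → ℝ) (I : Finset V) : ℝ :=
  ((Finset.univ : Finset (Finset V)).filter fun K => I ⊆ K).inf'
    ⟨Finset.univ, by simp⟩ φ

section BasePolytope

variable {V : Type*} [Fintype V]

def basePolytope (f : Finset V → ℝ) : Set (V → ℝ) :=
  {q | (∀ I : Finset V, ∑ v ∈ I, q v ≤ f I) ∧ ∑ v, q v = f univ}

variable [DecidableEq V]

theorem upMin_le_of_subset (φ : Finset V → ℝ) {I K : Finset V} (h : I ⊆ K) :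
    UpMin φ I ≤ φ K :=
  inf'_le _ (by simp [h])

theorem le_upMin_iff (φ : Finset V → ℝ) {a : ℝ} {I : Finset V} :
    a ≤ UpMin φ I ↔ ∀ K, I ⊆ K → a ≤ φ K :=
  (Finset.le_inf'_iff _ _).trans (by simp)

theorem upMin_univ (φ : Finset V → ℝ) : UpMin φ univ = φ univ :=
  le_antisymm (upMin_le_of_subset φ subset_rfl)
    ((le_upMin_iff φ).2 fun K hK => by rw [univ_subset_iff.1 hK])

theorem nonneg_of_mem_basePolytope_upMin {φ : Finset V → ℝ} {q : V → ℝ}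
    (hq : q ∈ basePolytope (UpMin φ)) (v : V) : 0 ≤ q v := by
  obtain ⟨hle, hsum⟩ := hq
  have hrest : ∑ w ∈ univ.erase v, q w ≤ φ univ :=
    (hle _).trans (upMin_le_of_subset φ (erase_subset _ _))
  have hsplit : q v + ∑ w ∈ univ.erase v, q w = ∑ w, q w := add_sum_erase _ _ (mem_univ v)
  rw [upMin_univ] at hsum
  linarith

theorem sum_le_upMin_of_nonneg {φ : Finset V → ℝ} {q : V → ℝ} (hpos : ∀ v, 0 ≤ q v)
    (hle : ∀ K, ∑ v ∈ K, q v ≤ φ K) (I : Finset V) : ∑ v ∈ I, q v ≤ UpMin φ I :=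
  (le_upMin_iff φ).2 fun K hIK =>
    (sum_le_sum_of_subset_of_nonneg hIK fun v _ _ => hpos v).trans (hle K)

theorem basePolytope_upMin (φ : Finset V → ℝ) :
    basePolytope (UpMin φ) = basePolytope φ ∩ {q | ∀ v, 0 ≤ q v} := by
  ext q
  constructor
  · intro hq
    refine ⟨⟨fun I => (hq.1 I).trans (upMin_le_of_subset φ subset_rfl), ?_⟩,
      nonneg_of_mem_basePolytope_upMin hq⟩
    rw [hq.2, upMin_univ]
  · rintro ⟨⟨hle, hsum⟩, hpos⟩
    exact ⟨sum_le_upMin_of_nonneg hpos hle, by rw [hsum, upMin_univ]⟩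

end BasePolytope

theorem base_polytope_upMin_general
    {V : Type*} [Fintype V] [DecidableEq V]
    (φ : Finset V → ℝ) (g : ℝ)
    (hg : φ Finset.univ = g) :
    ({q : V → ℝ | (∀ I : Finset V, ∑ v ∈ I, q v ≤ UpMin φ I) ∧
        ∑ v, q v = UpMin φ Finset.univ} =
      {q : V → ℝ | (∀ I : Finset V, ∑ v ∈ I, q v ≤ φ I) ∧ ∑ v, q v = φ Finset.univ} ∩
        {q : V → ℝ | (∀ v, 0 ≤ q v) ∧ ∑ v, q v = g}) ∧
    ({q : V → ℝ | (∀ I : Finset V, ∑ v ∈ I, q v ≤ UpMin φ I) ∧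
        ∑ v, q v = UpMin φ Finset.univ} =
      {q : V → ℝ | (∀ I : Finset V, ∑ v ∈ I, q v ≤ φ I) ∧ ∑ v, q v = φ Finset.univ} ∩
        {q : V → ℝ | ∀ v, 0 ≤ q v}) := by
  refine ⟨?_, basePolytope_upMin φ⟩
  have hsimplex : basePolytope φ ∩ {q | ∀ v, 0 ≤ q v} =
      basePolytope φ ∩ {q | (∀ v, 0 ≤ q v) ∧ ∑ v, q v = g} := by
    ext q
    simp only [Set.mem_inter_iff, Set.mem_ofPred_eq]
    exact ⟨fun ⟨hq, hpos⟩ => ⟨hq, hpos, hq.2.trans hg⟩, fun ⟨hq, hpos, _⟩ => ⟨hq, hpos⟩⟩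
  exact (basePolytope_upMin φ).trans hsimplex

/-- For a nonnegative submodular `φ` of range `g`, the base polytope of `UpMin φ`
equals the intersection of the base polytope of `φ` with the standard simplex
`Δ_g = {q ≥ 0 : q(V) = g}`, and also equals the intersection of the base polytope
of `φ` with the nonnegative orthant. -/
theorem base_polytope_upMin
    {V : Type*} [Fintype V] [DecidableEq V] [Nonempty V]
    (φ : Finset V → ℝ) (g : ℝ)
    (h0 : φ ∅ = 0)
    (hsub : ∀ I₁ I₂ : Finset V, φ (I₁ ∪ I₂) + φ (I₁ ∩ I₂) ≤ φ I₁ + φ I₂)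
    (hnn : ∀ I : Finset V, 0 ≤ φ I)
    (hg : φ Finset.univ = g) :
    ({q : V → ℝ | (∀ I : Finset V, ∑ v ∈ I, q v ≤ UpMin φ I) ∧
        ∑ v, q v = UpMin φ Finset.univ} =
      {q : V → ℝ | (∀ I : Finset V, ∑ v ∈ I, q v ≤ φ I) ∧ ∑ v, q v = φ Finset.univ} ∩
        {q : V → ℝ | (∀ v, 0 ≤ q v) ∧ ∑ v, q v = g}) ∧
    ({q : V → ℝ | (∀ I : Finset V, ∑ v ∈ I, q v ≤ UpMin φ I) ∧
        ∑ v, q v = UpMin φ Finset.univ} =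
      {q : V → ℝ | (∀ I : Finset V, ∑ v ∈ I, q v ≤ φ I) ∧ ∑ v, q v = φ Finset.univ} ∩
        {q : V → ℝ | ∀ v, 0 ≤ q v}) :=
  base_polytope_upMin_general φ g hg
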